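/- Let G be a graph and v, v_1, v_2 ∈ V(G) such that there exist edge-disjoint paths P_1 from v to v_1 and P_2 from v to v_2. If P_1 and P_2 are not well-arranged, then there exist edge-disjoint paths P'_1 from v to v_1 and P'_2 from v to v_2 such that E(P'_1) ∪ E(P'_2) is a proper subset of E(P_1) ∪ E(P_2). -/

import Mathlib

attribute [local instance] Classical.propDecidable

set_option autoImplicit false

noncomputable section

/-- A finite undirected loopless multigraph: a finite type of vertices, a finite type of
edges, and a map assigning to every edge its (unordered) pair of distinct endpoints. -/
structure Multigraph : Type 1 where
  V : Type
  E : Type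
  finV : Finite V
  finE : Finite E
  ends : E → Sym2 V
  loopless : ∀ e, ¬ (ends e).IsDiag

attribute [instance] Multigraph.finV Multigraph.finE

namespace Multigraph

variable {G : Multigraph}

/-- Walks in a multigraph, recorded together with their two endpoints. -/
inductive Walk (G : Multigraph) : G.V → G.V → Type where
  | nil {v : G.V} : Walk G v v
  | cons {u v w : G.V} (e : G.E) (h : G.ends e = s(u, v)) (t : Walk G v w) : Walk G u w

namespace Walk

/-- The list of edges traversed by a walk. -/
def edges : ∀ {u v : G.V}, G.Walk u v → List G.E
  | _, _, nil => []
  | _, _, cons e _ t => e :: t.edges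

/-- The list of vertices visited by a walk (in order). -/
def support : ∀ {u v : G.V}, G.Walk u v → List G.V
  | u, _, nil => [u]
  | u, _, cons _ _ t => u :: t.support

/-- Concatenation of walks. -/
def append : ∀ {u v w : G.V}, G.Walk u v → G.Walk v w → G.Walk u w
  | _, _, _, nil, q => q
  | _, _, _, cons e h t, q => cons e h (t.append q)

/-- Reversal of a walk. -/
def reverse : ∀ {u v : G.V}, G.Walk u v → G.Walk v u
  | _, _, nil => nil
  | _, _, cons e h t => t.reverse.append (cons e (by rw [h]; exact Sym2.eq_swap) nil)

/-- A walk is a path if it visits no vertex twice.  (A single vertex is a trivial path.) -/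
def IsPath {u v : G.V} (w : G.Walk u v) : Prop := w.support.Nodup

/-- A closed walk is a cycle if it uses at least one edge, repeats no edge, and repeats
no vertex except that it ends where it started. -/
def IsCycle {v : G.V} (w : G.Walk v v) : Prop :=
  w.edges ≠ [] ∧ w.edges.Nodup ∧ w.support.tail.Nodup

/-- The set of edges of a walk. -/
def edgeSet {u v : G.V} (w : G.Walk u v) : Set G.E := {e | e ∈ w.edges}

/-- The set of vertices of a walk. -/
def supportSet {u v : G.V} (w : G.Walk u v) : Set G.V := {x | x ∈ w.support}

end Walk

/-- Two walks are edge-disjoint if they share no edge. -/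
def EdgeDisjoint {u v u' v' : G.V} (p : G.Walk u v) (q : G.Walk u' v') : Prop :=
  ∀ e : G.E, e ∈ p.edges → e ∉ q.edges

/-- Two vertices are reachable from one another if some walk joins them. -/
def Reachable (G : Multigraph) (u v : G.V) : Prop := Nonempty (G.Walk u v)

/-- Reachability is an equivalence relation. -/
def reachSetoid (G : Multigraph) : Setoid G.V :=
  ⟨G.Reachable,
    ⟨fun _ => ⟨Walk.nil⟩, fun ⟨w⟩ => ⟨w.reverse⟩, fun ⟨w⟩ ⟨w'⟩ => ⟨w.append w'⟩⟩⟩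

/-- A multigraph is connected if every two vertices are joined by a walk. -/
def Connected (G : Multigraph) : Prop := ∀ u v : G.V, G.Reachable u v

/-- The number of connected components. -/
def numComponents (G : Multigraph) : ℕ := Nat.card (Quotient G.reachSetoid)

/-- A set of vertices is connected in `G` if any two of its vertices are joined by a
walk staying inside the set. -/
def ConnectedIn (G : Multigraph) (S : Set G.V) : Prop :=
  ∀ u ∈ S, ∀ v ∈ S, ∃ w : G.Walk u v, ∀ x ∈ w.support, x ∈ S

/-- Reachability inside a prescribed set of vertices, using only a prescribed
set of edges. -/
def ReachableWithin (G : Multigraph) (W : Set G.V) (E₀ : Set G.E) (u v : G.V) : Prop :=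
  ∃ w : G.Walk u v, (∀ x ∈ w.support, x ∈ W) ∧ ∀ e ∈ w.edges, e ∈ E₀

/-- The degree of a vertex: the number of edges incident to it. -/
def degree (G : Multigraph) (v : G.V) : ℕ := Nat.card {e : G.E // v ∈ G.ends e}

/-- A multigraph is sub-cubic if all its vertices have degree at most `3`. -/
def SubCubic (G : Multigraph) : Prop := ∀ v : G.V, G.degree v ≤ 3

/-- Deletion of a set of edges. -/
def deleteEdges (G : Multigraph) (F : Set G.E) : Multigraph where
  V := G.V
  E := {e : G.E // e ∉ F}
  finV := G.finV
  finE := inferInstance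
  ends := fun e => G.ends e.1
  loopless := fun e => G.loopless e.1

/-- An edge cut: a non-empty set of edges, all lying in one connected component,
whose deletion increases the number of connected components. -/
def IsEdgeCut (G : Multigraph) (F : Set G.E) : Prop :=
  F.Nonempty ∧
  (∀ e ∈ F, ∀ e' ∈ F, ∀ u v : G.V, u ∈ G.ends e → v ∈ G.ends e' → G.Reachable u v) ∧
  G.numComponents < (G.deleteEdges F).numComponents

/-- A minimal edge cut: its deletion produces exactly one more connected component. -/
def IsMinimalEdgeCut (G : Multigraph) (F : Set G.E) : Prop :=
  G.IsEdgeCut F ∧ (G.deleteEdges F).numComponents = G.numComponents + 1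

/-- An internal edge cut: a minimal edge cut such that both connected components into
which the component of `G` containing the cut is split have at least `2` vertices.
(Equivalently: every vertex of the component of `G` containing the cut lies, after
deletion of the cut, in a component with at least `2` vertices.) -/
def IsInternalEdgeCut (G : Multigraph) (F : Set G.E) : Prop :=
  G.IsMinimalEdgeCut F ∧
  ∀ v : G.V, (∃ e ∈ F, ∃ u ∈ G.ends e, G.Reachable v u) →
    2 ≤ Nat.card {u : G.V | (G.deleteEdges F).Reachable u v}

/-- `H` is immersed in `G`: there is an injection `f` of the vertices of `H` into the
vertices of `G`, and for every edge `{u,v}` of `H` a path in `G` from `f u` to `f v`,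
these paths being pairwise edge-disjoint. -/
def Immersion (H G : Multigraph) : Prop :=
  ∃ f : H.V → G.V, Function.Injective f ∧
    ∃ P : H.E → Σ a : G.V, Σ b : G.V, G.Walk a b,
      (∀ e : H.E, (P e).2.2.IsPath) ∧
      (∀ e : H.E, (H.ends e).map f = s((P e).1, (P e).2.1)) ∧
      ∀ e e' : H.E, e ≠ e' → EdgeDisjoint (P e).2.2 (P e').2.2

/-- The complete graph on five vertices. -/
def K5 : Multigraph where
  V := Fin 5
  E := {p : Sym2 (Fin 5) // ¬ p.IsDiag}
  finV := inferInstance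
  finE := inferInstance
  ends := fun e => e.1
  loopless := fun e => e.2

/-- The complete bipartite graph with two parts of three vertices. -/
def K33 : Multigraph where
  V := Fin 3 ⊕ Fin 3
  E := Fin 3 × Fin 3
  finV := inferInstance
  finE := inferInstance
  ends := fun p => s(Sum.inl p.1, Sum.inr p.2)
  loopless := fun p h => by
    rw [Sym2.mk_isDiag_iff] at h
    cases h

private lemma contract_key {α : Type} (S : Set α) (z : Sym2 α) :
    ¬ z.IsDiag → (¬ ∀ v ∈ z, v ∈ S) →
    ¬ (z.map fun v =>
        if h : v ∈ S then (Sum.inr () : {v : α // v ∉ S} ⊕ Unit) else Sum.inl ⟨v, h⟩).IsDiag := by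
  induction z using Sym2.ind with
  | _ a b =>
    intro hdiag hS h
    rw [Sym2.map_pair_eq, Sym2.mk_isDiag_iff] at h
    by_cases ha : a ∈ S <;> by_cases hb : b ∈ S
    · exact hS fun v hv => by rcases Sym2.mem_iff.mp hv with rfl | rfl <;> assumption
    · rw [dif_pos ha, dif_neg hb] at h
      cases h
    · rw [dif_neg ha, dif_pos hb] at h
      cases h
    · rw [dif_neg ha, dif_neg hb] at h
      injection h with h'
      exact hdiag (Sym2.mk_isDiag_iff.mpr (congrArg Subtype.val h'))

/-- Contraction of a set `S` of vertices of `G` to a single new vertex: edges lying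
entirely inside `S` disappear, edges meeting `S` are redirected to the new vertex.
(When `S` induces a connected subgraph this is the result of contracting all its edges.) -/
def contractSet (G : Multigraph) (S : Set G.V) : Multigraph where
  V := {v : G.V // v ∉ S} ⊕ Unit
  E := {e : G.E // ¬ ∀ v ∈ G.ends e, v ∈ S}
  finV := inferInstance
  finE := inferInstance
  ends := fun e => (G.ends e.1).map fun v =>
    if h : v ∈ S then Sum.inr () else Sum.inl ⟨v, h⟩
  loopless := fun e => contract_key S (G.ends e.1) (G.loopless e.1) e.2

/-- The graph obtained from `G` by subdividing every edge exactly once: each edge `e`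
is replaced by a new vertex joined to the two endpoints of `e`. -/
def subdivision (G : Multigraph) : Multigraph where
  V := G.V ⊕ G.E
  E := Σ e : G.E, {v : G.V // v ∈ G.ends e}
  finV := inferInstance
  finE := inferInstance
  ends := fun p => s(Sum.inl p.2.1, Sum.inr p.1)
  loopless := fun p h => by
    rw [Sym2.mk_isDiag_iff] at h
    cases h

/-- The multigraph associated with a simple graph. -/
def ofSimpleGraph {α : Type} [Finite α] (H : SimpleGraph α) : Multigraph where
  V := α
  E := {p : Sym2 α // p ∈ H.edgeSet}
  finV := ‹Finite α›
  finE := inferInstance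
  ends := fun e => e.1
  loopless := fun e => H.not_isDiag_of_mem_edgeSet e.2

/-- The `(r,q)`-cylinder: the cartesian product of a cycle on `r` vertices and a path
on `q` vertices. -/
def cylinder (r q : ℕ) : Multigraph :=
  ofSimpleGraph ((SimpleGraph.cycleGraph r).boxProd (SimpleGraph.pathGraph q))

/-- `H` is a minor of `G`: there are pairwise disjoint nonempty connected branch sets
`β u ⊆ V(G)`, one for every vertex `u` of `H`, and an injection `φ` of the edges of `H`
into the edges of `G` such that the edge `φ e` joins the branch sets of the two
endpoints of `e`. -/
def IsMinor (H G : Multigraph) : Prop :=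
  ∃ β : H.V → Set G.V, ∃ φ : H.E → G.E,
    Function.Injective φ ∧
    (∀ u : H.V, (β u).Nonempty) ∧
    (∀ u : H.V, G.ConnectedIn (β u)) ∧
    (∀ u v : H.V, u ≠ v → Disjoint (β u) (β v)) ∧
    ∀ (e : H.E) (u v : H.V), H.ends e = s(u, v) →
      ∃ x y : G.V, G.ends (φ e) = s(x, y) ∧ x ∈ β u ∧ y ∈ β v

/-- The degree of a vertex of a simple graph (number of neighbours). -/
def simpleDegree {n : ℕ} (T : SimpleGraph (Fin n)) (v : Fin n) : ℕ :=
  Nat.card {u : Fin n // T.Adj v u}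

/-- A branch decomposition of `G`: a ternary tree `T` together with a bijection between
the edges of `G` and the leaves of `T`. -/
structure BranchDecomposition (G : Multigraph) where
  n : ℕ
  T : SimpleGraph (Fin n)
  acyclic : T.IsAcyclic
  preconnected : T.Preconnected
  ternary : ∀ v : Fin n, simpleDegree T v ≤ 1 ∨ simpleDegree T v = 3
  leafEquiv : G.E ≃ {v : Fin n // simpleDegree T v ≤ 1}

/-- For an edge `{a,b}` of the tree of a branch decomposition, the number of vertices of
`G` incident both with an edge mapped to a leaf on the side of `a` and with an edge
mapped to a leaf on the side of `b` (sides taken in `T` minus the edge `{a,b}`). -/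
def BranchDecomposition.sigmaWidth {G : Multigraph} (B : BranchDecomposition G)
    (a b : Fin B.n) : ℕ :=
  Nat.card {x : G.V | ∃ e₁ e₂ : G.E, x ∈ G.ends e₁ ∧ x ∈ G.ends e₂ ∧
    (B.T.deleteEdges {s(a, b)}).Reachable (B.leafEquiv e₁).1 a ∧
    (B.T.deleteEdges {s(a, b)}).Reachable (B.leafEquiv e₂).1 b}

/-- The width of a branch decomposition. -/
def BranchDecomposition.width {G : Multigraph} (B : BranchDecomposition G) : ℕ :=
  sSup {w : ℕ | ∃ a b : Fin B.n, B.T.Adj a b ∧ w = B.sigmaWidth a b}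

/-- The branch-width of `G`: the minimum width of a branch decomposition of `G`. -/
def branchwidth (G : Multigraph) : ℕ :=
  sInf {w : ℕ | ∃ B : BranchDecomposition G, B.width = w}

/-- A (topological) embedding of the multigraph `G` in the space `X`: vertices become
distinct points, edges become arcs joining the images of their endpoints, arcs meet
vertex images only at their endpoints and meet each other only at images of vertices. -/
structure EmbeddingIn (G : Multigraph) (X : Type) [TopologicalSpace X] where
  vmap : G.V → X
  emap : G.E → unitInterval → X
  vmap_inj : Function.Injective vmap
  emap_cont : ∀ e, Continuous (emap e)
  emap_inj : ∀ e, Function.Injective (emap e)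
  emap_ends : ∀ e, (G.ends e).map vmap = s(emap e 0, emap e 1)
  emap_vertex : ∀ e t, emap e t ∈ Set.range vmap → t = 0 ∨ t = 1
  emap_disjoint : ∀ e e', e ≠ e' → ∀ t t', emap e t = emap e' t' →
    emap e t ∈ Set.range vmap

variable {X : Type} [TopologicalSpace X]

/-- The set of points of `X` occupied by the embedded graph. -/
def EmbeddingIn.carrier (emb : EmbeddingIn G X) : Set X :=
  Set.range emb.vmap ∪ ⋃ e : G.E, Set.range (emb.emap e)

/-- The set of points of `X` occupied by an embedded walk. -/
def EmbeddingIn.walkImage (emb : EmbeddingIn G X) {u v : G.V} (w : G.Walk u v) : Set X :=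
  (emb.vmap '' w.supportSet) ∪ ⋃ e ∈ w.edges, Set.range (emb.emap e)

/-- An open disk in `X`: an open set homeomorphic to an open disk of the plane. -/
def IsOpenDisk (U : Set X) : Prop :=
  IsOpen U ∧ Nonempty (↥U ≃ₜ ↥(Metric.ball (0 : EuclideanSpace ℝ (Fin 2)) 1))

/-- A disk around the vertex `x`: an open disk containing (the image of) `x` all of
whose points on the graph are `x` itself or lie on edges incident with `x`. -/
def EmbeddingIn.IsDiskAround (emb : EmbeddingIn G X) (x : G.V) (Δ : Set X) : Prop :=
  IsOpenDisk Δ ∧ emb.vmap x ∈ Δ ∧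
  ∀ p ∈ Δ ∩ emb.carrier,
    p = emb.vmap x ∨ ∃ e : G.E, x ∈ G.ends e ∧ p ∈ Set.range (emb.emap e)

/-- Two edge-disjoint walks are confluent if for every common vertex `x` that is not an
endpoint of either of them and every disk `Δ` around `x`, one of the connected
components of `Δ` minus the first walk contains no point of the second walk. -/
def Confluent (emb : EmbeddingIn G X) {u₁ w₁ u₂ w₂ : G.V}
    (P₁ : G.Walk u₁ w₁) (P₂ : G.Walk u₂ w₂) : Prop :=
  ∀ x : G.V, x ∈ P₁.support → x ∈ P₂.support →
    x ≠ u₁ → x ≠ w₁ → x ≠ u₂ → x ≠ w₂ →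
    ∀ Δ : Set X, emb.IsDiskAround x Δ →
      ∃ p ∈ Δ \ emb.walkImage P₁,
        connectedComponentIn (Δ \ emb.walkImage P₁) p ∩ emb.walkImage P₂ = ∅

/-- `x` is an overlapping vertex of `P₁` and `P₂`: a common vertex, not an endpoint of
either walk, such that for some disk `Δ` around `x` both connected components of `Δ`
minus `P₁` contain points of `P₂`. -/
def OverlapVertex (emb : EmbeddingIn G X) (x : G.V) {u₁ w₁ u₂ w₂ : G.V}
    (P₁ : G.Walk u₁ w₁) (P₂ : G.Walk u₂ w₂) : Prop :=
  x ∈ P₁.support ∧ x ∈ P₂.support ∧ x ≠ u₁ ∧ x ≠ w₁ ∧ x ≠ u₂ ∧ x ≠ w₂ ∧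
  ∃ Δ : Set X, emb.IsDiskAround x Δ ∧
    ∀ p ∈ Δ \ emb.walkImage P₁,
      (connectedComponentIn (Δ \ emb.walkImage P₁) p ∩ emb.walkImage P₂).Nonempty

/-- Two walks with the same first vertex are well-arranged if their common vertices
appear in the same order in both. -/
def WellArranged {u v₁ v₂ : G.V} (P₁ : G.Walk u v₁) (P₂ : G.Walk u v₂) : Prop :=
  P₁.support.filter (fun x => decide (x ∈ P₂.support)) =
    P₂.support.filter (fun x => decide (x ∈ P₁.support))

/-- `f_𝒫(x)`: the number of pairs of walks of the collection `P` for which `x` is an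
overlapping vertex. -/
def overlapCount (emb : EmbeddingIn G X) {r : ℕ} {v : G.V} {vs : Fin r → G.V}
    (P : (i : Fin r) → G.Walk v (vs i)) (x : G.V) : ℕ :=
  Nat.card {p : Fin r × Fin r // p.1 < p.2 ∧
    (OverlapVertex emb x (P p.1) (P p.2) ∨ OverlapVertex emb x (P p.2) (P p.1))}

/-- `g(𝒫)`: the sum over all vertices `x` of `f_𝒫(x)`. -/
def gFun (emb : EmbeddingIn G X) {r : ℕ} {v : G.V} {vs : Fin r → G.V}
    (P : (i : Fin r) → G.Walk v (vs i)) : ℕ :=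
  ∑ᶠ x : G.V, overlapCount emb P x

/-- The 2-dimensional sphere. -/
abbrev Sphere2 : Type := ↥(Metric.sphere (0 : EuclideanSpace ℝ (Fin 3)) 1)

/-- A multigraph is planar if it embeds in the sphere. -/
def Planar (G : Multigraph) : Prop := Nonempty (EmbeddingIn G Sphere2)

/-- The annulus between two disjoint cycles with point sets `K₁`, `K₂` on the sphere:
the complement of the two open disks `Δᵢ` bounded by `Kᵢ` containing no point of the
other cycle. -/
def annulusBetween (K₁ K₂ : Set Sphere2) : Set Sphere2 :=
  ({x : Sphere2 | x ∉ K₁ ∧ connectedComponentIn K₁ᶜ x ∩ K₂ = ∅} ∪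
   {x : Sphere2 | x ∉ K₂ ∧ connectedComponentIn K₂ᶜ x ∩ K₁ = ∅})ᶜ

/-- A collection of `r` pairwise disjoint cycles embedded in the sphere is nested if
consecutive annuli between them compose. -/
def NestedCycles (emb : EmbeddingIn G Sphere2) (r : ℕ) (c : Fin r → G.V)
    (C : (i : Fin r) → G.Walk (c i) (c i)) : Prop :=
  (∀ i, (C i).IsCycle) ∧
  (∀ i j : Fin r, i ≠ j → ∀ x, x ∈ (C i).support → x ∉ (C j).support) ∧
  ∀ (i : Fin r) (h2 : i.1 + 2 < r),
    annulusBetween (emb.walkImage (C i)) (emb.walkImage (C ⟨i.1 + 1, by omega⟩)) ∪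
      annulusBetween (emb.walkImage (C ⟨i.1 + 1, by omega⟩))
        (emb.walkImage (C ⟨i.1 + 2, h2⟩)) =
    annulusBetween (emb.walkImage (C i)) (emb.walkImage (C ⟨i.1 + 2, h2⟩))

/-- The intersection of the walks `P` and `C` is a (possibly trivial) path: the common
vertices and common edges of `P` and `C` are exactly those of some path, in particular
`P` meets `C`. -/
def IsPathIntersection (G : Multigraph) {a b c d : G.V}
    (P : G.Walk a b) (C : G.Walk c d) : Prop :=
  ∃ (x y : G.V) (Q : G.Walk x y), Q.IsPath ∧
    Q.supportSet = P.supportSet ∩ C.supportSet ∧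
    Q.edgeSet = P.edgeSet ∩ C.edgeSet

/-- `G`, embedded in the sphere by `emb`, contains an `(r,q)`-railed annulus: `r` nested
pairwise disjoint cycles all met by `q` paths (rails), the intersection of each rail
with each cycle being a (possibly trivial) path. -/
def HasRailedAnnulus (G : Multigraph) (emb : EmbeddingIn G Sphere2) (r q : ℕ) : Prop :=
  ∃ (c : Fin r → G.V) (C : (i : Fin r) → G.Walk (c i) (c i)),
    NestedCycles emb r c C ∧
    ∃ (a b : Fin q → G.V) (P : (j : Fin q) → G.Walk (a j) (b j)),
      (∀ j, (P j).IsPath) ∧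
      ∀ (i : Fin r) (j : Fin q), IsPathIntersection G (P j) (C i)

/-- `G` is a `k`-edge-sum of `G₁` and `G₂`: there are vertices `v₁` of `G₁` and `v₂` of
`G₂`, both of degree `k`, and a bijection `σ` between the edges at `v₁` and the edges at
`v₂`, such that `G` is obtained from the disjoint union of `G₁` and `G₂` by deleting
`v₁` and `v₂` and lifting every pair `e`, `σ e` to a single new edge. -/
def IsEdgeSum (G G₁ G₂ : Multigraph) (k : ℕ) : Prop :=
  ∃ (v₁ : G₁.V) (v₂ : G₂.V),
    G₁.degree v₁ = k ∧ G₂.degree v₂ = k ∧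
    ∃ (σ : {e : G₁.E // v₁ ∈ G₁.ends e} ≃ {e : G₂.E // v₂ ∈ G₂.ends e})
      (fV : ({u : G₁.V // u ≠ v₁} ⊕ {u : G₂.V // u ≠ v₂}) ≃ G.V)
      (fE : ({e : G₁.E // v₁ ∉ G₁.ends e} ⊕ {e : G₂.E // v₂ ∉ G₂.ends e} ⊕
        {e : G₁.E // v₁ ∈ G₁.ends e}) ≃ G.E),
      (∀ (e : G₁.E) (he : v₁ ∉ G₁.ends e) (a b : G₁.V), G₁.ends e = s(a, b) →
        ∃ (ha : a ≠ v₁) (hb : b ≠ v₁),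
          G.ends (fE (Sum.inl ⟨e, he⟩)) = s(fV (Sum.inl ⟨a, ha⟩), fV (Sum.inl ⟨b, hb⟩))) ∧
      (∀ (e : G₂.E) (he : v₂ ∉ G₂.ends e) (a b : G₂.V), G₂.ends e = s(a, b) →
        ∃ (ha : a ≠ v₂) (hb : b ≠ v₂),
          G.ends (fE (Sum.inr (Sum.inl ⟨e, he⟩))) =
            s(fV (Sum.inr ⟨a, ha⟩), fV (Sum.inr ⟨b, hb⟩))) ∧
      ∀ (e : {e : G₁.E // v₁ ∈ G₁.ends e}) (a : G₁.V) (b : G₂.V),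
        G₁.ends e.1 = s(v₁, a) → G₂.ends (σ e).1 = s(v₂, b) →
        ∃ (ha : a ≠ v₁) (hb : b ≠ v₂),
          G.ends (fE (Sum.inr (Sum.inr e))) =
            s(fV (Sum.inl ⟨a, ha⟩), fV (Sum.inr ⟨b, hb⟩))

/-- `G` can be constructed by applying consecutive `i`-edge-sums, for `i ≤ 3`,
starting from graphs satisfying the predicate `base`. -/
inductive ConstructibleFrom (base : Multigraph → Prop) : Multigraph → Prop where
  | base (G : Multigraph) : base G → ConstructibleFrom base G
  | edgeSum (G G₁ G₂ : Multigraph) (k : ℕ) (hk : k ≤ 3) :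
      ConstructibleFrom base G₁ → ConstructibleFrom base G₂ →
      IsEdgeSum G G₁ G₂ k → ConstructibleFrom base G

end Multigraph

/-!
If two common vertices `a ≠ b` occur as `a … b` along `P₁` but as `b … a` along `P₂`, exchange
the initial segments: follow `P₂` up to `b` and then `P₁` to `v₁`, and follow `P₁` up to `a` and
then `P₂` to `v₂`. Since `P₁` and `P₂` are edge-disjoint paths, these two walks are
edge-disjoint, and neither uses the (non-empty) segment of `P₁` from `a` to `b`. Shortening
them to paths only removes edges.
-/

theorem List.Perm.exists_inversion_of_ne {α : Type*} :
    ∀ {l₁ l₂ : List α}, l₁.Perm l₂ → l₁ ≠ l₂ →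
      ∃ a b, a ≠ b ∧ [a, b].Sublist l₁ ∧ [b, a].Sublist l₂
  | [], _, hp, hne => absurd (List.nil_perm.mp hp).symm hne
  | _ :: _, [], hp, _ => absurd (List.perm_nil.mp hp) (List.cons_ne_nil _ _)
  | x :: t₁, z :: t₂, hp, hne => by
    by_cases hxz : x = z
    · subst hxz
      obtain ⟨a, b, hab, h₁, h₂⟩ :=
        (List.perm_cons x).mp hp |>.exists_inversion_of_ne fun h => hne (h ▸ rfl)
      exact ⟨a, b, hab, h₁.cons _, h₂.cons _⟩
    · have hz : z ∈ t₁ :=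
        (List.mem_cons.mp (hp.mem_iff.mpr List.mem_cons_self)).resolve_left (Ne.symm hxz)
      have hx : x ∈ t₂ :=
        (List.mem_cons.mp (hp.mem_iff.mp List.mem_cons_self)).resolve_left hxz
      exact ⟨x, z, hxz, (List.singleton_sublist.mpr hz).cons_cons _,
        (List.singleton_sublist.mpr hx).cons_cons _⟩

namespace Multigraph

variable {G : Multigraph}

theorem edgeDisjoint_iff_disjoint_edgeSet {u v u' v' : G.V} {p : G.Walk u v}
    {q : G.Walk u' v'} : EdgeDisjoint p q ↔ Disjoint p.edgeSet q.edgeSet :=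
  Set.disjoint_left.symm

namespace Walk

theorem edges_append : ∀ {x y z : G.V} (p : G.Walk x y) (q : G.Walk y z),
    (p.append q).edges = p.edges ++ q.edges
  | _, _, _, nil, _ => rfl
  | _, _, _, cons e _ t, q => congrArg (e :: ·) (edges_append t q)

theorem edgeSet_append {x y z : G.V} (p : G.Walk x y) (q : G.Walk y z) :
    (p.append q).edgeSet = p.edgeSet ∪ q.edgeSet := by
  ext e
  simp [edgeSet, edges_append]

theorem edgeSet_nonempty_of_ne {x y : G.V} (w : G.Walk x y) (hxy : x ≠ y) :
    w.edgeSet.Nonempty := by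
  cases w with
  | nil => exact absurd rfl hxy
  | cons e _ _ => exact ⟨e, List.mem_cons_self⟩

theorem start_mem_support {x y : G.V} (w : G.Walk x y) : x ∈ w.support := by
  cases w <;> exact List.mem_cons_self

theorem mem_support_of_mem_edges : ∀ {x y : G.V} (w : G.Walk x y) {e : G.E},
    e ∈ w.edges → ∀ z ∈ G.ends e, z ∈ w.support
  | _, _, nil, _, he => absurd he List.not_mem_nil
  | _, _, cons e' h t, e, he => by
    intro z hz
    rcases List.mem_cons.mp he with rfl | he
    · rw [h] at hz
      rcases Sym2.mem_iff.mp hz with rfl | rfl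
      · exact List.mem_cons_self
      · exact List.mem_cons_of_mem _ t.start_mem_support
    · exact List.mem_cons_of_mem _ (t.mem_support_of_mem_edges he z hz)

theorem IsPath.edges_nodup : ∀ {x y : G.V} {w : G.Walk x y}, w.IsPath → w.edges.Nodup
  | _, _, nil, _ => List.nodup_nil
  | x, _, cons e h t, hp => by
    obtain ⟨hx, ht⟩ := List.nodup_cons.mp hp
    refine List.nodup_cons.mpr ⟨fun he => hx ?_, IsPath.edges_nodup ht⟩
    exact t.mem_support_of_mem_edges he x (h ▸ Sym2.mem_mk_left _ _)

theorem IsPath.disjoint_edgeSet {x y z : G.V} {p : G.Walk x y} {q : G.Walk y z}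
    (h : (p.append q).IsPath) : Disjoint p.edgeSet q.edgeSet := by
  have hnd := h.edges_nodup
  rw [edges_append, List.nodup_append] at hnd
  exact Set.disjoint_left.mpr fun e hp hq => hnd.2.2 e hp e hq rfl

theorem IsPath.of_append_right : ∀ {x y z : G.V} {p : G.Walk x y} {q : G.Walk y z},
    (p.append q).IsPath → q.IsPath
  | _, _, _, nil, _, h => h
  | _, _, _, cons _ _ _, _, h => IsPath.of_append_right (List.nodup_cons.mp h).2

theorem exists_eq_append_of_mem_support : ∀ {x y u : G.V} (p : G.Walk x y),
    u ∈ p.support → ∃ (q : G.Walk x u) (r : G.Walk u y), p = q.append r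
  | _, _, _, nil, hu => by
    obtain rfl := List.mem_singleton.mp hu
    exact ⟨nil, nil, rfl⟩
  | x, _, u, cons e h t, hu => by
    by_cases hux : u = x
    · subst hux
      exact ⟨nil, cons e h t, rfl⟩
    · obtain ⟨q, r, rfl⟩ :=
        t.exists_eq_append_of_mem_support ((List.mem_cons.mp hu).resolve_left hux)
      exact ⟨cons e h q, r, rfl⟩

theorem exists_eq_append_append_of_sublist : ∀ {x y a b : G.V} (p : G.Walk x y),
    [a, b].Sublist p.support →
      ∃ (q : G.Walk x a) (r : G.Walk a b) (s : G.Walk b y), p = q.append (r.append s)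
  | _, _, _, _, nil, h => absurd h.length_le (by simp [support])
  | _, _, _, _, cons e he t, h => by
    rcases List.sublist_cons_iff.mp h with h | ⟨_, hab, hb⟩
    · obtain ⟨q, r, s, rfl⟩ := t.exists_eq_append_append_of_sublist h
      exact ⟨cons e he q, r, s, rfl⟩
    · obtain ⟨rfl, rfl⟩ := List.cons_eq_cons.mp hab
      obtain ⟨r, s, rfl⟩ := t.exists_eq_append_of_mem_support (List.singleton_sublist.mp hb)
      exact ⟨nil, cons e he r, s, rfl⟩

theorem exists_isPath_edgeSet_subset : ∀ {x y : G.V} (w : G.Walk x y),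
    ∃ p : G.Walk x y, p.IsPath ∧ p.edgeSet ⊆ w.edgeSet
  | _, _, nil => ⟨nil, List.nodup_singleton _, subset_rfl⟩
  | x, _, cons e h t => by
    obtain ⟨p, hp, hpt⟩ := t.exists_isPath_edgeSet_subset
    have htw : t.edgeSet ⊆ (cons e h t).edgeSet := fun _ => List.mem_cons_of_mem _
    by_cases hx : x ∈ p.support
    · obtain ⟨q, r, rfl⟩ := p.exists_eq_append_of_mem_support hx
      refine ⟨r, hp.of_append_right, subset_trans ?_ (hpt.trans htw)⟩
      rw [edgeSet_append]
      exact Set.subset_union_right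
    · refine ⟨cons e h p, List.nodup_cons.mpr ⟨hx, hp⟩, ?_⟩
      rintro e' he'
      rcases List.mem_cons.mp he' with rfl | he'
      · exact List.mem_cons_self
      · exact htw (hpt he')

end Walk

theorem exists_inversion_of_not_wellArranged {u v₁ v₂ : G.V} {P₁ : G.Walk u v₁}
    {P₂ : G.Walk u v₂} (h₁ : P₁.IsPath) (h₂ : P₂.IsPath) (hnwa : ¬ WellArranged P₁ P₂) :
    ∃ a b, a ≠ b ∧ [a, b].Sublist P₁.support ∧ [b, a].Sublist P₂.support := by
  have hperm : (P₁.support.filter (· ∈ P₂.support)).Perm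
      (P₂.support.filter (· ∈ P₁.support)) := by
    refine (List.perm_ext_iff_of_nodup (h₁.filter _) (h₂.filter _)).mpr fun x => ?_
    simp only [List.mem_filter, decide_eq_true_eq]
    exact and_comm
  obtain ⟨a, b, hab, ha, hb⟩ := hperm.exists_inversion_of_ne hnwa
  exact ⟨a, b, hab, ha.trans List.filter_sublist, hb.trans List.filter_sublist⟩

theorem exists_edgeDisjoint_paths_of_crossing {v a b v₁ v₂ : G.V} (s₁ : G.Walk v a)
    (t₁ : G.Walk a b) (r₁ : G.Walk b v₁) (s₂ : G.Walk v b) (t₂ : G.Walk b a)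
    (r₂ : G.Walk a v₂) (h₁ : (s₁.append (t₁.append r₁)).IsPath)
    (h₂ : (s₂.append (t₂.append r₂)).IsPath)
    (hdisj : EdgeDisjoint (s₁.append (t₁.append r₁)) (s₂.append (t₂.append r₂)))
    (hab : a ≠ b) :
    ∃ (P₁' : G.Walk v v₁) (P₂' : G.Walk v v₂),
      P₁'.IsPath ∧ P₂'.IsPath ∧ EdgeDisjoint P₁' P₂' ∧
      P₁'.edgeSet ∪ P₂'.edgeSet ⊂
        (s₁.append (t₁.append r₁)).edgeSet ∪ (s₂.append (t₂.append r₂)).edgeSet := by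
  obtain ⟨P₁', hP₁', hsub₁⟩ := (s₂.append r₁).exists_isPath_edgeSet_subset
  obtain ⟨P₂', hP₂', hsub₂⟩ := (s₁.append r₂).exists_isPath_edgeSet_subset
  obtain ⟨e, he⟩ := t₁.edgeSet_nonempty_of_ne hab
  have hs₁ := h₁.disjoint_edgeSet
  have ht₁ := h₁.of_append_right.disjoint_edgeSet
  have hs₂ := h₂.disjoint_edgeSet
  simp only [edgeDisjoint_iff_disjoint_edgeSet, Walk.edgeSet_append]
    at hdisj hs₁ hs₂ hsub₁ hsub₂ ⊢
  rw [Set.disjoint_left] at hdisj hs₁ ht₁ hs₂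
  have hexchange : Disjoint (s₂.edgeSet ∪ r₁.edgeSet) (s₁.edgeSet ∪ r₂.edgeSet) := by
    rw [Set.disjoint_left]
    rintro f (hf | hf) (hf' | hf')
    · exact hdisj (.inl hf') (.inl hf)
    · exact hs₂ hf (.inr hf')
    · exact hs₁ hf' (.inr hf)
    · exact hdisj (.inr (.inr hf)) (.inr (.inr hf'))
  have he_unused : e ∉ (s₂.edgeSet ∪ r₁.edgeSet) ∪ (s₁.edgeSet ∪ r₂.edgeSet) := by
    rintro ((h | h) | (h | h))
    · exact hdisj (.inr (.inl he)) (.inl h)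
    · exact ht₁ he h
    · exact hs₁ h (.inl he)
    · exact hdisj (.inr (.inl he)) (.inr (.inr h))
  refine ⟨P₁', P₂', hP₁', hP₂', hexchange.mono hsub₁ hsub₂,
    (Set.union_subset_union hsub₁ hsub₂).trans_ssubset ?_⟩
  exact (Set.ssubset_iff_of_subset (by grind)).mpr ⟨e, .inl (.inr (.inl he)), he_unused⟩

theorem statement5 (G : Multigraph) (v v₁ v₂ : G.V)
    (P₁ : G.Walk v v₁) (P₂ : G.Walk v v₂)
    (h₁ : P₁.IsPath) (h₂ : P₂.IsPath)
    (hdisj : EdgeDisjoint P₁ P₂)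
    (hnwa : ¬ WellArranged P₁ P₂) :
    ∃ (P₁' : G.Walk v v₁) (P₂' : G.Walk v v₂),
      P₁'.IsPath ∧ P₂'.IsPath ∧ EdgeDisjoint P₁' P₂' ∧
      P₁'.edgeSet ∪ P₂'.edgeSet ⊂ P₁.edgeSet ∪ P₂.edgeSet := by
  obtain ⟨a, b, hab, hab₁, hba₂⟩ := exists_inversion_of_not_wellArranged h₁ h₂ hnwa
  obtain ⟨s₁, t₁, r₁, rfl⟩ := P₁.exists_eq_append_append_of_sublist hab₁
  obtain ⟨s₂, t₂, r₂, rfl⟩ := P₂.exists_eq_append_append_of_sublist hba₂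
  exact exists_edgeDisjoint_paths_of_crossing s₁ t₁ r₁ s₂ t₂ r₂ h₁ h₂ hdisj hab

end Multigraph
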